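/- Let F be a field with at least d+1 elements, let f be an n-variate polynomial over F of individual degree at most d, let T ⊆ {1,…,n} with |T| = k, and let w be a nonnegative integer. Introduce fresh variable tuples y_1,…,y_{w+1} (each a tuple of k variables) and z_1,…,z_{w+1} (each a tuple of n−k variables), and let E_0 be the (w+1)×(w+1) matrix over the polynomial ring in these fresh variables whose (i,j) entry is f with the variables indexed by T substituted by y_i and the remaining variables substituted by z_j. Then det(E_0) is a nonzero polynomial if and only if rank(M_T(f)) > w. -/

import Mathlib

/-!
Write `f = ∑_{a,b} M[a,b] x_T^a x_{T^c}^b` with `M = M_T(f)`. Then `E₀ = Y · M · Z` with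
`Y[i,a] = y_i^a` and `Z[b,j] = z_j^b`, and expanding the determinant multilinearly in rows and
columns gives `det E₀ = ∑_{r,c} det M[r,c] · ∏_i y_i^{r i} ∏_j z_j^{c j}`, the sum running over all
maps `r : Fin (w+1) → {0,…,d}^T` and `c : Fin (w+1) → {0,…,d}^{T^c}`. Distinct `(r, c)` give
distinct monomials, so `det E₀ ≠ 0` iff some `(w+1) × (w+1)` minor of `M` is nonzero, i.e. iff
`rank M > w`.
-/

open MvPolynomial

/-- `f` has individual degree at most `d`: every variable appears with exponent at most `d`
in every monomial of `f`. -/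
def IndivDegLE {F : Type*} [CommSemiring F] {V : Type*} (f : MvPolynomial V F) (d : ℕ) : Prop :=
  ∀ m ∈ f.support, ∀ i : V, m i ≤ d

/-- The Nisan matrix of `f` with respect to the set `T` of variables, where exponents
range over `{0, …, d}`. -/
noncomputable def nisanMatrix {F : Type*} [Field F] {V : Type*} [Fintype V] [DecidableEq V]
    (d : ℕ) (f : MvPolynomial V F) (T : Finset V) :
    Matrix ({x : V // x ∈ T} → Fin (d + 1)) ({x : V // x ∉ T} → Fin (d + 1)) F :=
  Matrix.of fun a b => MvPolynomial.coeff
    (Finsupp.equivFunOnFinite.symm fun i =>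
      if h : i ∈ T then (a ⟨i, h⟩ : ℕ) else (b ⟨i, h⟩ : ℕ)) f

/-- Ordered product `L 0 * L 1 * ⋯ * L (k-1)` of matrices of varying dimensions. -/
def matProdUpTo {R : Type*} [CommSemiring R] (ws : ℕ → ℕ)
    (L : (i : ℕ) → Matrix (Fin (ws i)) (Fin (ws (i + 1))) R) :
    (k : ℕ) → Matrix (Fin (ws 0)) (Fin (ws k)) R
  | 0 => 1
  | k + 1 => matProdUpTo ws L k * L k

/-- `f` has an ROABP of width `w` in the order `σ`: there are widths
`ws 0 = ws n = 1`, `1 ≤ ws i ≤ w` for `0 < i < n`, and coefficient matrices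
`A i j ∈ F^{ws i × ws (i+1)}` such that `f` is the `(1,1)` entry of the ordered product
of the layer matrices `Σ_j A i j • x_{σ(i)}^j`. -/
def HasROABP {F : Type*} [Field F] {n : ℕ} (d : ℕ) (f : MvPolynomial (Fin n) F)
    (σ : Equiv.Perm (Fin n)) (w : ℕ) : Prop :=
  ∃ (ws : ℕ → ℕ) (A : (i : Fin n) → Fin (d + 1) →
      Matrix (Fin (ws i.val)) (Fin (ws (i.val + 1))) F),
    ws 0 = 1 ∧ ws n = 1 ∧ (∀ i : ℕ, 0 < i → i < n → 1 ≤ ws i ∧ ws i ≤ w) ∧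
    ∀ (p : Fin (ws 0)) (q : Fin (ws n)),
      f = matProdUpTo ws
        (fun i => if h : i < n then
            Matrix.of (fun p' q' => ∑ j : Fin (d + 1),
              MvPolynomial.C (A ⟨i, h⟩ j p' q') * MvPolynomial.X (σ ⟨i, h⟩) ^ (j : ℕ))
          else 0) n p q

/-- `T` is a prefix of the order `σ`, i.e. `T = {σ(1), …, σ(i)}` for some `i ∈ {1, …, n}`
(0-indexed: the image under `σ` of the first `i` positions). -/
def IsPrefixOf {n : ℕ} (σ : Equiv.Perm (Fin n)) (T : Finset (Fin n)) : Prop :=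
  ∃ i : ℕ, 1 ≤ i ∧ i ≤ n ∧
    T = (Finset.univ.filter fun l : Fin n => (l : ℕ) < i).image (fun l => σ l)

/-- The `(1,1)` entry of the ordered product of the layer matrices of a width-`w` ROABP
in the order `σ`, with coefficient matrices `A`. -/
noncomputable def roabpPoly {F : Type*} [Field F] {n : ℕ} (d w : ℕ) (hw : 0 < w)
    (σ : Equiv.Perm (Fin n)) (A : Fin n → Fin (d + 1) → Matrix (Fin w) (Fin w) F) :
    MvPolynomial (Fin n) F :=
  (((List.finRange n).map fun i => Matrix.of fun p q =>
      ∑ j : Fin (d + 1), MvPolynomial.C (A i j p q) * MvPolynomial.X (σ i) ^ (j : ℕ)).prod)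
    ⟨0, hw⟩ ⟨0, hw⟩

namespace Matrix

variable {K : Type*} [Field K] {α β : Type*} [Fintype α] [Fintype β]

theorem exists_linearIndependent_rows_of_le_rank (M : Matrix α β K) {r : ℕ} (h : r ≤ M.rank) :
    ∃ a : Fin r → α, LinearIndependent K (M.submatrix a id).row := by
  rw [rank_eq_finrank_span_row] at h
  obtain ⟨v, hv, -, hli⟩ := Submodule.exists_fun_fin_finrank_span_eq K (Set.range M.row)
  choose a ha using hv
  refine ⟨a ∘ Fin.castLE h, ?_⟩
  rw [show (M.submatrix (a ∘ Fin.castLE h) id).row = v ∘ Fin.castLE h from funext fun _ => ha _]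
  exact hli.comp _ (Fin.castLE_injective h)

theorem le_rank_iff_exists_det_submatrix_ne_zero [DecidableEq α] [DecidableEq β]
    (M : Matrix α β K) (r : ℕ) :
    r ≤ M.rank ↔ ∃ (a : Fin r → α) (b : Fin r → β), (M.submatrix a b).det ≠ 0 := by
  constructor
  · intro h
    obtain ⟨a, ha⟩ := M.exists_linearIndependent_rows_of_le_rank h
    have hrank : r ≤ (M.submatrix a id)ᵀ.rank := by
      rw [rank_transpose, ha.rank_matrix, Fintype.card_fin]
    obtain ⟨b, hb⟩ := (M.submatrix a id)ᵀ.exists_linearIndependent_rows_of_le_rank hrank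
    refine ⟨a, b, ?_⟩
    rw [← det_transpose]
    exact ((isUnit_iff_isUnit_det _).mp (linearIndependent_rows_iff_isUnit.mp hb)).ne_zero
  · rintro ⟨a, b, hab⟩
    calc r = (M.submatrix a b).rank := by rw [rank_of_det_ne_zero hab, Fintype.card_fin]
      _ ≤ M.rank := rank_submatrix_le M a b

variable {R : Type*} [CommRing R] {m : Type*} [Fintype m] [DecidableEq m]

theorem det_mul_eq_sum_prod_mul_det_submatrix (A : Matrix m α R) (B : Matrix α m R) :
    (A * B).det = ∑ r : m → α, (∏ i, A i (r i)) * (B.submatrix r id).det := by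
  have hrows : A * B = fun i => ∑ a, A i a • B a := by
    ext i j
    simp [mul_apply, Finset.sum_apply]
  calc (A * B).det = detRowAlternating (fun i => ∑ a, A i a • B a) := by rw [hrows]; rfl
    _ = ∑ r : m → α, detRowAlternating (fun i => A i (r i) • B (r i)) :=
        MultilinearMap.map_sum detRowAlternating.toMultilinearMap _
    _ = _ := by simp_rw [AlternatingMap.map_smul_univ]; rfl

theorem det_mul_mul_eq_sum (A : Matrix m α R) (B : Matrix α β R) (C : Matrix β m R) :
    (A * B * C).det = ∑ r : m → α, ∑ c : m → β,
      (∏ i, A i (r i)) * (∏ j, C (c j) j) * (B.submatrix r c).det := by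
  rw [Matrix.mul_assoc, det_mul_eq_sum_prod_mul_det_submatrix]
  refine Finset.sum_congr rfl fun r _ => ?_
  have hsub : ((B * C).submatrix r id)ᵀ = Cᵀ * (B.submatrix r id)ᵀ := by
    rw [← transpose_mul]; rfl
  rw [← det_transpose, hsub, det_mul_eq_sum_prod_mul_det_submatrix, Finset.mul_sum]
  refine Finset.sum_congr rfl fun c _ => ?_
  rw [← det_transpose]
  simp only [transpose_apply, mul_assoc]
  rfl

end Matrix

section NisanDecomposition

variable {F : Type*} [Field F] {V : Type*} [Fintype V] [DecidableEq V] {d : ℕ} {T : Finset V}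

noncomputable def nisanExp (d : ℕ) (T : Finset V) (a : {x // x ∈ T} → Fin (d + 1))
    (b : {x // x ∉ T} → Fin (d + 1)) : V →₀ ℕ :=
  Finsupp.equivFunOnFinite.symm fun i => if h : i ∈ T then (a ⟨i, h⟩ : ℕ) else (b ⟨i, h⟩ : ℕ)

theorem nisanMatrix_apply (f : MvPolynomial V F) (a : {x // x ∈ T} → Fin (d + 1))
    (b : {x // x ∉ T} → Fin (d + 1)) : nisanMatrix d f T a b = coeff (nisanExp d T a b) f :=
  rfl

theorem nisanExp_apply_of_mem (a : {x // x ∈ T} → Fin (d + 1)) (b : {x // x ∉ T} → Fin (d + 1))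
    (t : {x // x ∈ T}) : nisanExp d T a b t = a t := by
  simp [nisanExp, t.2]

theorem nisanExp_apply_of_not_mem (a : {x // x ∈ T} → Fin (d + 1))
    (b : {x // x ∉ T} → Fin (d + 1)) (t : {x // x ∉ T}) : nisanExp d T a b t = b t := by
  simp [nisanExp, t.2]

theorem nisanExp_injective :
    Function.Injective fun p : ({x // x ∈ T} → Fin (d + 1)) × ({x // x ∉ T} → Fin (d + 1)) =>
      nisanExp d T p.1 p.2 := by
  rintro ⟨a, b⟩ ⟨a', b'⟩ h
  simp only at h
  ext t
  · simpa [nisanExp_apply_of_mem] using congrArg (· t) h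
  · simpa [nisanExp_apply_of_not_mem] using congrArg (· t) h

variable (T) in
theorem IndivDegLE.support_subset_image_nisanExp {f : MvPolynomial V F} (hf : IndivDegLE f d) :
    f.support ⊆ Finset.univ.image fun p : ({x // x ∈ T} → Fin (d + 1)) ×
      ({x // x ∉ T} → Fin (d + 1)) => nisanExp d T p.1 p.2 := by
  intro m hm
  refine Finset.mem_image.mpr ⟨(fun t => ⟨m t, Nat.lt_succ_of_le (hf m hm t)⟩,
    fun t => ⟨m t, Nat.lt_succ_of_le (hf m hm t)⟩), Finset.mem_univ _, ?_⟩
  ext v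
  simp [nisanExp]

variable (T) in
theorem IndivDegLE.eval₂_eq_sum_nisanMatrix {S : Type*} [CommSemiring S] {f : MvPolynomial V F}
    (hf : IndivDegLE f d) (φ : F →+* S) (g : V → S) :
    eval₂ φ g f = ∑ a : {x // x ∈ T} → Fin (d + 1), ∑ b : {x // x ∉ T} → Fin (d + 1),
      φ (nisanMatrix d f T a b) * ((∏ t : {x // x ∈ T}, g t ^ (a t : ℕ)) *
        ∏ t : {x // x ∉ T}, g t ^ (b t : ℕ)) := by
  rw [eval₂_eq', Finset.sum_subset (hf.support_subset_image_nisanExp T), Finset.sum_image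
    fun p _ q _ h => nisanExp_injective h, Fintype.sum_prod_type]
  · refine Finset.sum_congr rfl fun a _ => Finset.sum_congr rfl fun b _ => ?_
    rw [nisanMatrix_apply, ← Fintype.prod_subtype_mul_prod_subtype (· ∈ T)]
    simp only [nisanExp_apply_of_mem, nisanExp_apply_of_not_mem]
    -- the two sides differ only in the `Fintype` instance on `↥T`
    convert rfl
  · intro m _ hm
    rw [notMem_support_iff.mp hm, map_zero, zero_mul]

end NisanDecomposition

theorem MvPolynomial.sum_monomial_eq_zero_iff {R σ ι : Type*} [CommSemiring R] [Fintype ι]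
    {e : ι → σ →₀ ℕ} (he : Function.Injective e) (x : ι → R) :
    ∑ i, monomial (e i) (x i) = 0 ↔ ∀ i, x i = 0 := by
  classical
  refine ⟨fun h i => ?_, fun h => by simp [h]⟩
  simpa [coeff_sum, coeff_monomial, he.eq_iff] using congrArg (coeff (e i)) h

section FreshVariables

variable {F : Type*} [Field F] {V : Type*} {ι : Type*} {d : ℕ} {T : Finset V}

-- `Sum.inl (i, t)` is the variable `y_{i,t}` and `Sum.inr (j, t)` is `z_{j,t}`.
abbrev FreshVars (ι : Type*) (T : Finset V) : Type _ := (ι × {x // x ∈ T}) ⊕ (ι × {x // x ∉ T})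

noncomputable def freshEvalMatrix [DecidableEq V] (ι : Type*) (f : MvPolynomial V F)
    (T : Finset V) :
    Matrix ι ι (MvPolynomial (FreshVars ι T) F) :=
  Matrix.of fun i j => eval₂ C
    (fun t => if h : t ∈ T then X (Sum.inl (i, ⟨t, h⟩)) else X (Sum.inr (j, ⟨t, h⟩))) f

variable (F ι d T) in
noncomputable def freshRowMonomials :
    Matrix ι ({x // x ∈ T} → Fin (d + 1)) (MvPolynomial (FreshVars ι T) F) :=
  Matrix.of fun i a => ∏ t, X (Sum.inl (i, t)) ^ (a t : ℕ)

variable (F ι d T) in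
noncomputable def freshColMonomials [Fintype V] [DecidableEq V] :
    Matrix ({x // x ∉ T} → Fin (d + 1)) ι (MvPolynomial (FreshVars ι T) F) :=
  Matrix.of fun b j => ∏ t, X (Sum.inr (j, t)) ^ (b t : ℕ)

theorem IndivDegLE.freshEvalMatrix_eq [Fintype V] [DecidableEq V] {f : MvPolynomial V F}
    (hf : IndivDegLE f d) :
    freshEvalMatrix ι f T =
      freshRowMonomials F ι d T * (nisanMatrix d f T).map (C (σ := FreshVars ι T)) *
        freshColMonomials F ι d T := by
  refine Matrix.ext fun i j => ?_
  simp only [freshEvalMatrix, freshRowMonomials, freshColMonomials, Matrix.of_apply,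
    Matrix.mul_apply, Matrix.map_apply, hf.eval₂_eq_sum_nisanMatrix T, Finset.sum_mul]
  rw [Finset.sum_comm]
  refine Finset.sum_congr rfl fun b _ => Finset.sum_congr rfl fun a _ => ?_
  rw [mul_left_comm, ← mul_assoc]
  congr 2
  · exact Finset.prod_congr rfl fun t _ => by rw [dif_pos t.2]
  · exact funext fun t => by rw [dif_neg t.2]

noncomputable def freshExp [Finite ι] [Finite V] (r : ι → {x // x ∈ T} → Fin (d + 1))
    (c : ι → {x // x ∉ T} → Fin (d + 1)) : FreshVars ι T →₀ ℕ :=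
  Finsupp.equivFunOnFinite.symm (Sum.elim (fun p => (r p.1 p.2 : ℕ)) (fun p => (c p.1 p.2 : ℕ)))

theorem freshExp_injective [Finite ι] [Finite V] :
    Function.Injective fun p : (ι → {x // x ∈ T} → Fin (d + 1)) ×
      (ι → {x // x ∉ T} → Fin (d + 1)) => freshExp p.1 p.2 := by
  rintro ⟨r, c⟩ ⟨r', c'⟩ h
  simp only at h
  ext i t
  · simpa [freshExp] using congrArg (· (Sum.inl (i, t))) h
  · simpa [freshExp] using congrArg (· (Sum.inr (i, t))) h

theorem prod_freshRowMonomials_mul_prod_freshColMonomials [Fintype ι] [Fintype V]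
    [DecidableEq V] (r : ι → {x // x ∈ T} → Fin (d + 1))
    (c : ι → {x // x ∉ T} → Fin (d + 1)) :
    (∏ i, freshRowMonomials F ι d T i (r i)) * ∏ j, freshColMonomials F ι d T (c j) j =
      monomial (freshExp r c) 1 := by
  rw [monomial_eq, C_1, one_mul, Finsupp.prod_fintype _ _ fun _ => pow_zero _,
    Fintype.prod_sum_type, Fintype.prod_prod_type, Fintype.prod_prod_type]
  simp [freshRowMonomials, freshColMonomials, freshExp]

theorem IndivDegLE.det_freshEvalMatrix [Fintype ι] [DecidableEq ι] [Fintype V]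
    [DecidableEq V] {f : MvPolynomial V F} (hf : IndivDegLE f d) :
    (freshEvalMatrix ι f T).det = ∑ p : (ι → {x // x ∈ T} → Fin (d + 1)) ×
      (ι → {x // x ∉ T} → Fin (d + 1)),
        monomial (freshExp p.1 p.2) ((nisanMatrix d f T).submatrix p.1 p.2).det := by
  rw [hf.freshEvalMatrix_eq, Matrix.det_mul_mul_eq_sum, Fintype.sum_prod_type]
  refine Finset.sum_congr rfl fun r _ => Finset.sum_congr rfl fun c _ => ?_
  rw [prod_freshRowMonomials_mul_prod_freshColMonomials, Matrix.submatrix_map,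
    ← RingHom.mapMatrix_apply, ← RingHom.map_det, mul_comm, C_mul_monomial, mul_one]

end FreshVariables

theorem det_fresh_eval_matrix_ne_zero_iff_general {F : Type*} [Field F] {n d w : ℕ}
    (f : MvPolynomial (Fin n) F) (hf : IndivDegLE f d) (T : Finset (Fin n)) :
    (Matrix.det (Matrix.of fun i j : Fin (w + 1) =>
        eval₂ (C : F →+* MvPolynomial
            ((Fin (w + 1) × {x : Fin n // x ∈ T}) ⊕ (Fin (w + 1) × {x : Fin n // x ∉ T})) F)
          (fun t => if h : t ∈ T then X (Sum.inl (i, ⟨t, h⟩)) else X (Sum.inr (j, ⟨t, h⟩)))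
          f) ≠ 0)
      ↔ w < (nisanMatrix d f T).rank := by
  change (freshEvalMatrix (Fin (w + 1)) f T).det ≠ 0 ↔ _
  rw [hf.det_freshEvalMatrix, Ne, sum_monomial_eq_zero_iff freshExp_injective, not_forall,
    Nat.lt_iff_add_one_le, Matrix.le_rank_iff_exists_det_submatrix_ne_zero, Prod.exists]

/-- Let `E₀` be the `(w+1) × (w+1)` matrix over the polynomial ring in fresh variable tuples
`y_1, …, y_{w+1}` (tuples over `T`) and `z_1, …, z_{w+1}` (tuples over the complement of `T`)
whose `(i,j)` entry is `f` with the `T`-variables replaced by `y_i` and the rest by `z_j`.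
If `F` has at least `d + 1` elements, then `det E₀ ≠ 0` iff `rank M_T(f) > w`. -/
theorem det_fresh_eval_matrix_ne_zero_iff {F : Type*} [Field F] {n d w : ℕ}
    (hF : ∃ s : Fin (d + 1) → F, Function.Injective s)
    (f : MvPolynomial (Fin n) F) (hf : IndivDegLE f d) (T : Finset (Fin n)) :
    (Matrix.det (Matrix.of fun i j : Fin (w + 1) =>
        eval₂ (C : F →+* MvPolynomial
            ((Fin (w + 1) × {x : Fin n // x ∈ T}) ⊕ (Fin (w + 1) × {x : Fin n // x ∉ T})) F)
          (fun t => if h : t ∈ T then X (Sum.inl (i, ⟨t, h⟩)) else X (Sum.inr (j, ⟨t, h⟩)))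
          f) ≠ 0)
      ↔ w < (nisanMatrix d f T).rank :=
  det_fresh_eval_matrix_ne_zero_iff_general f hf T
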